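/- In the stage game get-close-to-the-target, suppose the target k is known to lie in the integer interval {lo,…,hi} (with lo ≤ hi), player 1 plays the midpoint a₁ = ⌊(lo+hi)/2⌋, and player 2 wins the round with some action a₂. Then either a₂ ≤ a₁ and k lies in {lo,…,a₁−1}, or a₂ > a₁ and k lies in {a₁+1,…,hi}; in either case the set of targets in {lo,…,hi} consistent with the outcome has at most ⌊(hi−lo+1)/2⌋ elements. -/

import Mathlib

/-- Possible outcomes of a round of a zero-sum stage game. -/
inductive Outcome
  | P1Wins
  | P2Wins
  | Draw
deriving DecidableEq

/-- The outcome of a round of *get-close-to-the-target* with actions `a₁` (player 1),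
`a₂` (player 2) and hidden target `k`: if `|aᵢ - k| < |a₋ᵢ - k|` then player `i` wins;
if `a₁ = a₂ = a ≠ k` then player 1 wins if `a < k` and player 2 wins if `a > k`;
otherwise the round is a draw. -/
def outcome (a₁ a₂ k : ℤ) : Outcome :=
  if |a₁ - k| < |a₂ - k| then .P1Wins
  else if |a₂ - k| < |a₁ - k| then .P2Wins
  else if a₁ = a₂ ∧ a₁ ≠ k then (if a₁ < k then .P1Wins else .P2Wins)
  else .Draw

/-!
Player 2 can only win if the target lies strictly beyond `a₁` on the side of `a₂`. So the
targets consistent with a win of player 2 lie in one of the two halves that remain of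
`{lo,…,hi}` once the midpoint is removed, and each has at most `⌊(hi−lo+1)/2⌋` elements.
-/

open Finset

lemma outcome_eq_P2Wins_imp {a₁ a₂ k : ℤ} (h : outcome a₁ a₂ k = .P2Wins) :
    (a₂ ≤ a₁ ∧ k < a₁) ∨ (a₁ < a₂ ∧ a₁ < k) := by
  unfold outcome at h
  split_ifs at h <;> cases abs_cases (a₁ - k) <;> cases abs_cases (a₂ - k) <;> omega

lemma filter_outcome_eq_P2Wins_subset_of_le {lo hi a₁ a₂ : ℤ} (ha : a₂ ≤ a₁) :
    (Icc lo hi).filter (fun k => outcome a₁ a₂ k = .P2Wins) ⊆ Icc lo (a₁ - 1) := by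
  intro k hk
  rw [mem_filter, mem_Icc] at hk
  have := outcome_eq_P2Wins_imp hk.2
  rw [mem_Icc]
  omega

lemma filter_outcome_eq_P2Wins_subset_of_lt {lo hi a₁ a₂ : ℤ} (ha : a₁ < a₂) :
    (Icc lo hi).filter (fun k => outcome a₁ a₂ k = .P2Wins) ⊆ Icc (a₁ + 1) hi := by
  intro k hk
  rw [mem_filter, mem_Icc] at hk
  have := outcome_eq_P2Wins_imp hk.2
  rw [mem_Icc]
  omega

lemma card_Icc_below_midpoint_le (lo hi : ℤ) :
    #(Icc lo ((lo + hi) / 2 - 1)) ≤ ((hi - lo + 1) / 2).toNat := by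
  rw [Int.card_Icc]
  omega

lemma card_Icc_above_midpoint_le (lo hi : ℤ) :
    #(Icc ((lo + hi) / 2 + 1) hi) ≤ ((hi - lo + 1) / 2).toNat := by
  rw [Int.card_Icc]
  omega

theorem stmt3_general (lo hi a₁ a₂ k : ℤ)
    (hk : k ∈ Finset.Icc lo hi)
    (ha₁ : a₁ = (lo + hi) / 2)
    (hwin : outcome a₁ a₂ k = Outcome.P2Wins) :
    ((a₂ ≤ a₁ ∧ k ∈ Finset.Icc lo (a₁ - 1)) ∨ (a₁ < a₂ ∧ k ∈ Finset.Icc (a₁ + 1) hi)) ∧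
    ((Finset.Icc lo hi).filter
        (fun k' => outcome a₁ a₂ k' = Outcome.P2Wins)).card ≤ ((hi - lo + 1) / 2).toNat := by
  have hk_win : k ∈ (Icc lo hi).filter (fun k' => outcome a₁ a₂ k' = .P2Wins) :=
    mem_filter.2 ⟨hk, hwin⟩
  subst ha₁
  rcases le_or_gt a₂ ((lo + hi) / 2) with ha | ha
  · have hsub := filter_outcome_eq_P2Wins_subset_of_le (lo := lo) (hi := hi) ha
    exact ⟨.inl ⟨ha, hsub hk_win⟩, (card_le_card hsub).trans (card_Icc_below_midpoint_le lo hi)⟩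
  · have hsub := filter_outcome_eq_P2Wins_subset_of_lt (lo := lo) (hi := hi) ha
    exact ⟨.inr ⟨ha, hsub hk_win⟩, (card_le_card hsub).trans (card_Icc_above_midpoint_le lo hi)⟩

/-- In the stage game get-close-to-the-target, suppose the target `k` is known to lie in
the integer interval `{lo,…,hi}` (with `lo ≤ hi`), player 1 plays the midpoint
`a₁ = ⌊(lo+hi)/2⌋`, and player 2 wins the round with some action `a₂`. Then either
`a₂ ≤ a₁` and `k ∈ {lo,…,a₁−1}`, or `a₂ > a₁` and `k ∈ {a₁+1,…,hi}`; in either case the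
set of targets in `{lo,…,hi}` consistent with the outcome has at most
`⌊(hi−lo+1)/2⌋` elements. -/
theorem stmt3 (n lo hi a₁ a₂ k : ℤ) (hn : 1 ≤ n)
    (hlo : 1 ≤ lo) (hlohi : lo ≤ hi) (hhi : hi ≤ n)
    (hk : k ∈ Finset.Icc lo hi) (ha₂ : a₂ ∈ Finset.Icc 1 n)
    (ha₁ : a₁ = (lo + hi) / 2)
    (hwin : outcome a₁ a₂ k = Outcome.P2Wins) :
    ((a₂ ≤ a₁ ∧ k ∈ Finset.Icc lo (a₁ - 1)) ∨ (a₁ < a₂ ∧ k ∈ Finset.Icc (a₁ + 1) hi)) ∧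
    ((Finset.Icc lo hi).filter
        (fun k' => outcome a₁ a₂ k' = Outcome.P2Wins)).card ≤ ((hi - lo + 1) / 2).toNat :=
  stmt3_general lo hi a₁ a₂ k hk ha₁ hwin
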